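/- arXiv:2110.02720 — 2 statements merged into one kernel-verified Lean document; each statement's English description precedes it below -/
import Mathlib

section
/- There is no function g : ℝ → ℝ that is continuous at θ = 0 and such that for every θ ∈ ℝ the value g(θ) is a global minimizer over ℝ of the function x ↦ (x² − 1)² + θx. In other words, every selection of global minimizers of the inner problem is discontinuous at θ = 0, so the outer design function of the paper's toy bi-level problem min_θ x̂(θ) is discontinuous at θ = 0. -/
/-- There is no function g : ℝ → ℝ continuous at θ = 0 such that for every θ,
g(θ) is a global minimizer over ℝ of `x ↦ (x² − 1)² + θx`. -/
theorem toy_bilevel_no_continuous_selection :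
    ¬ ∃ g : ℝ → ℝ, ContinuousAt g 0 ∧
      ∀ θ : ℝ, ∀ x : ℝ,
        (g θ ^ 2 - 1) ^ 2 + θ * g θ ≤ (x ^ 2 - 1) ^ 2 + θ * x := by
  rintro ⟨g, hc, h⟩
  have hneg : ∀ θ : ℝ, 0 < θ → g θ < 0 := by
    intro θ hθ
    have := h θ (-1)
    nlinarith [sq_nonneg (g θ ^ 2 - 1)]
  have hpos : ∀ θ : ℝ, θ < 0 → 0 < g θ := by
    intro θ hθ
    have := h θ 1
    nlinarith [sq_nonneg (g θ ^ 2 - 1)]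
  have h0 : Filter.Tendsto (fun n : ℕ => (1 : ℝ) / (n + 1)) Filter.atTop (nhds 0) :=
    tendsto_one_div_add_atTop_nhds_zero_nat
  have hle : g 0 ≤ 0 := by
    have ht : Filter.Tendsto (fun n : ℕ => g (1 / (n + 1))) Filter.atTop (nhds (g 0)) :=
      hc.tendsto.comp h0
    exact le_of_tendsto' ht fun n => (hneg _ (by positivity)).le
  have hge : 0 ≤ g 0 := by
    have h0' : Filter.Tendsto (fun n : ℕ => -((1 : ℝ) / (n + 1))) Filter.atTop (nhds 0) := by
      simpa using h0.neg
    have ht : Filter.Tendsto (fun n : ℕ => g (-(1 / (n + 1)))) Filter.atTop (nhds (g 0)) :=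
      hc.tendsto.comp h0'
    refine ge_of_tendsto' ht fun n => (hpos _ ?_).le
    have : (0 : ℝ) < 1 / (n + 1) := by positivity
    linarith
  have hz : g 0 = 0 := le_antisymm hle hge
  have := h 0 1
  rw [hz] at this
  norm_num at this
end

section
/- Let A ∈ ℝ^{m×n}, L ∈ ℝ^{r×n}, b ∈ ℝ^m, λ ≥ 0, p, q ∈ (0, 2], and ε > 0. Define the smoothed L^p−L^q objective F_ε(x) = Σ_{j=1}^m ((Ax − b)_j² + ε²)^{p/2} + λ Σ_{i=1}^r ((Lx)_i² + ε²)^{q/2}. Fix x_k ∈ ℝⁿ and set weights w_j = ((Ax_k − b)_j² + ε²)^{(p−2)/2} and v_i = ((Lx_k)_i² + ε²)^{(q−2)/2}. Then for all x ∈ ℝⁿ: F_ε(x) ≤ F_ε(x_k) + (p/2) Σ_{j=1}^m w_j ((Ax − b)_j² − (Ax_k − b)_j²) + λ(q/2) Σ_{i=1}^r v_i ((Lx)_i² − (Lx_k)_i²), with equality at x = x_k. That is, the quadratic function on the right (a scaled version of the paper's quadratic tangent majorant M(x, x_k) plus a constant depending only on x_k) majorizes F_ε and touches it at x_k. -/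
open Real in
/-- Tangent line inequality for the concave function `y ↦ y ^ α`, `0 ≤ α ≤ 1`. -/
lemma rpow_tangent_le {x y α : ℝ} (hx : 0 < x) (hy : 0 ≤ y) (hα0 : 0 ≤ α) (hα1 : α ≤ 1) :
    y ^ α ≤ x ^ α + α * x ^ (α - 1) * (y - x) := by
  set s : ℝ := y / x - 1 with hs
  have hs1 : -1 ≤ s := by
    have : 0 ≤ y / x := div_nonneg hy hx.le
    simp [hs]; linarith
  have hb := rpow_one_add_le_one_add_mul_self hs1 hα0 hα1
  have h1s : 1 + s = y / x := by ring
  have hxa : (0:ℝ) < x ^ α := Real.rpow_pos_of_pos hx α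
  have key : (y / x) ^ α ≤ 1 + α * (y / x - 1) := by rwa [h1s] at hb
  have := mul_le_mul_of_nonneg_left key hxa.le
  have hyx : x ^ α * (y / x) ^ α = y ^ α := by
    rw [← Real.mul_rpow hx.le (div_nonneg hy hx.le), mul_div_cancel₀ _ hx.ne']
  rw [hyx] at this
  refine this.trans_eq ?_
  have hxm1 : x ^ (α - 1) = x ^ α / x := by
    rw [Real.rpow_sub hx, Real.rpow_one]
  rw [hxm1]
  field_simp

open Real in
/-- The scaled quadratic tangent majorant of the smoothed L^p−L^q objective
`F_ε(x) = Σ_j ((Ax − b)_j² + ε²)^(p/2) + λ Σ_i ((Lx)_i² + ε²)^(q/2)`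
at x_k majorizes F_ε everywhere and touches it at x_k. -/
theorem smoothed_lplq_quadratic_majorant
    (m n r : ℕ) (A : Matrix (Fin m) (Fin n) ℝ) (L : Matrix (Fin r) (Fin n) ℝ)
    (b : Fin m → ℝ) (lam p q ε : ℝ) (hlam : 0 ≤ lam)
    (hp0 : 0 < p) (hp2 : p ≤ 2) (hq0 : 0 < q) (hq2 : q ≤ 2) (hε : 0 < ε)
    (F : (Fin n → ℝ) → ℝ)
    (hF : ∀ x, F x = (∑ j, ((A.mulVec x - b) j ^ 2 + ε ^ 2) ^ (p / 2)) +
      lam * ∑ i, ((L.mulVec x) i ^ 2 + ε ^ 2) ^ (q / 2))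
    (xk : Fin n → ℝ) (w : Fin m → ℝ) (v : Fin r → ℝ)
    (hw : ∀ j, w j = ((A.mulVec xk - b) j ^ 2 + ε ^ 2) ^ ((p - 2) / 2))
    (hv : ∀ i, v i = ((L.mulVec xk) i ^ 2 + ε ^ 2) ^ ((q - 2) / 2))
    (M : (Fin n → ℝ) → ℝ)
    (hM : ∀ x, M x = F xk +
      (p / 2) * ∑ j, w j * ((A.mulVec x - b) j ^ 2 - (A.mulVec xk - b) j ^ 2) +
      lam * (q / 2) * ∑ i, v i * ((L.mulVec x) i ^ 2 - (L.mulVec xk) i ^ 2)) :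
    (∀ x, F x ≤ M x) ∧ F xk = M xk := by
  have hε2 : (0:ℝ) < ε ^ 2 := by positivity
  constructor
  · intro x
    rw [hF x, hM x, hF xk]
    have h1 : ∀ j, ((A.mulVec x - b) j ^ 2 + ε ^ 2) ^ (p / 2) ≤
        ((A.mulVec xk - b) j ^ 2 + ε ^ 2) ^ (p / 2) +
        (p / 2) * (w j * ((A.mulVec x - b) j ^ 2 - (A.mulVec xk - b) j ^ 2)) := by
      intro j
      have hxpos : (0:ℝ) < (A.mulVec xk - b) j ^ 2 + ε ^ 2 := by positivity
      have hynn : (0:ℝ) ≤ (A.mulVec x - b) j ^ 2 + ε ^ 2 := by positivity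
      have := rpow_tangent_le (α := p / 2) hxpos hynn (by linarith) (by linarith)
      have hwj : w j = ((A.mulVec xk - b) j ^ 2 + ε ^ 2) ^ (p / 2 - 1) := by
        rw [hw j]; ring_nf
      rw [hwj]
      calc ((A.mulVec x - b) j ^ 2 + ε ^ 2) ^ (p / 2)
          ≤ ((A.mulVec xk - b) j ^ 2 + ε ^ 2) ^ (p / 2) +
            (p / 2) * ((A.mulVec xk - b) j ^ 2 + ε ^ 2) ^ (p / 2 - 1) *
            (((A.mulVec x - b) j ^ 2 + ε ^ 2) - ((A.mulVec xk - b) j ^ 2 + ε ^ 2)) := this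
        _ = _ := by ring
    have h2 : ∀ i, ((L.mulVec x) i ^ 2 + ε ^ 2) ^ (q / 2) ≤
        ((L.mulVec xk) i ^ 2 + ε ^ 2) ^ (q / 2) +
        (q / 2) * (v i * ((L.mulVec x) i ^ 2 - (L.mulVec xk) i ^ 2)) := by
      intro i
      have hxpos : (0:ℝ) < (L.mulVec xk) i ^ 2 + ε ^ 2 := by positivity
      have hynn : (0:ℝ) ≤ (L.mulVec x) i ^ 2 + ε ^ 2 := by positivity
      have := rpow_tangent_le (α := q / 2) hxpos hynn (by linarith) (by linarith)
      have hvi : v i = ((L.mulVec xk) i ^ 2 + ε ^ 2) ^ (q / 2 - 1) := by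
        rw [hv i]; ring_nf
      rw [hvi]
      calc ((L.mulVec x) i ^ 2 + ε ^ 2) ^ (q / 2)
          ≤ ((L.mulVec xk) i ^ 2 + ε ^ 2) ^ (q / 2) +
            (q / 2) * ((L.mulVec xk) i ^ 2 + ε ^ 2) ^ (q / 2 - 1) *
            (((L.mulVec x) i ^ 2 + ε ^ 2) - ((L.mulVec xk) i ^ 2 + ε ^ 2)) := this
        _ = _ := by ring
    have S1 : (∑ j, ((A.mulVec x - b) j ^ 2 + ε ^ 2) ^ (p / 2)) ≤
        (∑ j, ((A.mulVec xk - b) j ^ 2 + ε ^ 2) ^ (p / 2)) +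
        (p / 2) * ∑ j, w j * ((A.mulVec x - b) j ^ 2 - (A.mulVec xk - b) j ^ 2) := by
      rw [Finset.mul_sum, ← Finset.sum_add_distrib]
      exact Finset.sum_le_sum fun j _ => h1 j
    have S2 : (∑ i, ((L.mulVec x) i ^ 2 + ε ^ 2) ^ (q / 2)) ≤
        (∑ i, ((L.mulVec xk) i ^ 2 + ε ^ 2) ^ (q / 2)) +
        (q / 2) * ∑ i, v i * ((L.mulVec x) i ^ 2 - (L.mulVec xk) i ^ 2) := by
      rw [Finset.mul_sum, ← Finset.sum_add_distrib]
      exact Finset.sum_le_sum fun i _ => h2 i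
    have := mul_le_mul_of_nonneg_left S2 hlam
    nlinarith [this, S1]
  · rw [hM xk]; simp
end
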